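/- Let w₁,…,w_k ∈ S¹ be unit vectors in ℝ², and let b₁,…,b_k ∈ ℝ be such that for every choice of signs ε ∈ {−1, +1}^k one has Σ_{j=1}^k ε_j b_j ≠ 0. Define F : S¹ → ℝ by F(θ) = Σ_{j=1}^k b_j (1 − (2/π) arccos(⟨θ, w_j⟩)), i.e., the interaction of θ with the target nodes under the sign-activation potential Φ(θ, w) = 1 − (2/π) cos⁻¹(θᵀw). Then every local minimum (indeed every local extremum) θ of F on S¹ satisfies θ = w_j or θ = −w_j for some j. In particular, for almost every b ∈ ℝ^k all local minima of the single-node sign-activation loss on S¹ lie at ±w_j. -/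

import Mathlib

open Finset RealInnerProductSpace

/-! If `θ ≠ ±wⱼ`, then `⟪θ, wⱼ⟫ = cos φⱼ` with `0 < φⱼ < π`. Rotating `θ` by a small angle `t`
turns this into `cos (φⱼ + σⱼ t)` for a sign `σⱼ`, whose `arccos` is just `φⱼ + σⱼ t`. Along the
rotation `F` is therefore affine in `t` with slope `-(2/π) ∑ σⱼ bⱼ`, which is nonzero by the
genericity of `b`, so `θ` cannot be a local extremum. -/

open Filter Topology Real Module

theorem eventually_arccos_cos_add {φ : ℝ} (h0 : 0 < φ) (hπ : φ < π) :
    ∀ᶠ t in 𝓝 (0 : ℝ), arccos (cos (φ + t)) = φ + t := by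
  have hφ : ∀ᶠ t in 𝓝 (0 : ℝ), φ + t ∈ Set.Ioo 0 π := by
    have : Tendsto (fun t : ℝ => φ + t) (𝓝 0) (𝓝 φ) := by
      simpa using (continuous_const_add φ).tendsto 0
    exact this.eventually (isOpen_Ioo.mem_nhds ⟨h0, hπ⟩)
  filter_upwards [hφ] with t ht using arccos_cos ht.1.le ht.2.le

theorem exists_sign_cos_add_sin_eq_cos {c s : ℝ} (h : c ^ 2 + s ^ 2 = 1) :
    ∃ σ : ℝ, (σ = 1 ∨ σ = -1) ∧ ∀ t, c * cos t + s * sin t = cos (arccos c + σ * t) := by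
  have hcos : cos (arccos c) = c := cos_arccos (by nlinarith) (by nlinarith)
  have hsin : sin (arccos c) = |s| := by
    rw [sin_arccos, show 1 - c ^ 2 = s ^ 2 by linarith, sqrt_sq_eq_abs]
  rcases lt_or_ge s 0 with hs | hs
  · refine ⟨1, .inl rfl, fun t => ?_⟩
    rw [one_mul, cos_add, hcos, hsin, abs_of_neg hs]
    ring
  · refine ⟨-1, .inr rfl, fun t => ?_⟩
    rw [neg_one_mul, ← sub_eq_add_neg, cos_sub, hcos, hsin, abs_of_nonneg hs]

theorem exists_sign_eventually_arccos_cos_add_sin {c s : ℝ} (h : c ^ 2 + s ^ 2 = 1)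
    (hc : |c| < 1) :
    ∃ σ : ℝ, (σ = 1 ∨ σ = -1) ∧
      ∀ᶠ t in 𝓝 (0 : ℝ), arccos (c * cos t + s * sin t) = arccos c + σ * t := by
  obtain ⟨σ, hσ, hcs⟩ := exists_sign_cos_add_sin_eq_cos h
  obtain ⟨hc₁, hc₂⟩ := abs_lt.1 hc
  have hπ : arccos c < π := arccos_lt_pi.2 hc₁
  have hσt : Tendsto (fun t : ℝ => σ * t) (𝓝 0) (𝓝 0) := by
    simpa using (continuous_const_mul σ).tendsto 0
  refine ⟨σ, hσ, ?_⟩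
  filter_upwards [hσt.eventually (eventually_arccos_cos_add (arccos_pos.2 hc₂) hπ)] with t ht
  rw [hcs, ht]

section Orientation

variable {V : Type*} [NormedAddCommGroup V] [InnerProductSpace ℝ V] [Fact (finrank ℝ V = 2)]
  (o : Orientation ℝ V (Fin 2))

theorem Orientation.continuous_rotation_coe (x : V) :
    Continuous fun t : ℝ => o.rotation t x := by
  simp only [o.rotation_apply, Real.Angle.cos_coe, Real.Angle.sin_coe]
  fun_prop

theorem Orientation.inner_rotation_coe_left (x y : V) (t : ℝ) :
    ⟪o.rotation t x, y⟫ = ⟪x, y⟫ * cos t + o.areaForm x y * sin t := by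
  rw [o.rotation_apply, inner_add_left, real_inner_smul_left, real_inner_smul_left,
    o.inner_rightAngleRotation_left, Real.Angle.cos_coe, Real.Angle.sin_coe]
  ring

theorem Orientation.exists_sign_eventually_arccos_inner_rotation {x w : V} (hx : ‖x‖ = 1)
    (hw : ‖w‖ = 1) (hxw : x ≠ w) (hxw' : x ≠ -w) :
    ∃ σ : ℝ, (σ = 1 ∨ σ = -1) ∧
      ∀ᶠ t : ℝ in 𝓝 0, arccos ⟪o.rotation t x, w⟫ = arccos ⟪x, w⟫ + σ * t := by
  have hsq : ⟪x, w⟫ ^ 2 + o.areaForm x w ^ 2 = 1 := by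
    rw [o.inner_sq_add_areaForm_sq, hx, hw]; norm_num
  have hlt : |⟪x, w⟫| < 1 := by
    refine (abs_real_inner_le_norm x w).trans_eq (by rw [hx, hw, one_mul]) |>.lt_of_ne ?_
    intro h
    rcases abs_eq zero_le_one |>.1 h with h | h
    · exact hxw ((inner_eq_one_iff_of_norm_eq_one (𝕜 := ℝ) hx hw).1 h)
    · refine hxw' ((inner_eq_one_iff_of_norm_eq_one (𝕜 := ℝ) hx (by rwa [norm_neg])).1 ?_)
      rw [inner_neg_right, h, neg_neg]
  simpa only [o.inner_rotation_coe_left] using exists_sign_eventually_arccos_cos_add_sin hsq hlt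

end Orientation

theorem IsLocalExtr.eq_zero_of_eventuallyEq_affine {g : ℝ → ℝ} {a A B : ℝ}
    (hg : g =ᶠ[𝓝 a] fun t => A + B * (t - a)) (hextr : IsLocalExtr g a) : B = 0 := by
  refine hextr.hasDerivAt_eq_zero (HasDerivAt.congr_of_eventuallyEq ?_ hg)
  simpa using ((hasDerivAt_id a).sub_const a).const_mul B |>.const_add A

theorem exists_eq_or_eq_neg_of_isLocalExtrOn_sphere {V ι : Type*} [NormedAddCommGroup V]
    [InnerProductSpace ℝ V] [Fact (finrank ℝ V = 2)] [Fintype ι] {w : ι → V}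
    (hw : ∀ j, ‖w j‖ = 1) {b : ι → ℝ}
    (hb : ∀ ε : ι → ℝ, (∀ j, ε j = 1 ∨ ε j = -1) → ∑ j, ε j * b j ≠ 0) {θ : V}
    (hθ : ‖θ‖ = 1)
    (hextr : IsLocalExtrOn (fun θ => ∑ j, b j * (1 - (2 / π) * arccos ⟪θ, w j⟫))
      (Metric.sphere 0 1) θ) :
    ∃ j, θ = w j ∨ θ = -w j := by
  by_contra! hne
  have : FiniteDimensional ℝ V := .of_fact_finrank_eq_two
  set F := fun θ => ∑ j, b j * (1 - (2 / π) * arccos ⟪θ, w j⟫)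
  let o : Orientation ℝ V (Fin 2) := (finBasisOfFinrankEq ℝ V Fact.out).orientation
  let γ : ℝ → V := fun t => o.rotation t θ
  choose σ hσ hσγ using fun j =>
    o.exists_sign_eventually_arccos_inner_rotation hθ (hw j) (hne j).1 (hne j).2
  have hγ : Tendsto γ (𝓝 0) (𝓝[Metric.sphere 0 1] θ) := by
    refine tendsto_nhdsWithin_iff.2 ⟨?_, .of_forall fun t => ?_⟩
    · simpa [γ] using (o.continuous_rotation_coe θ).tendsto 0
    · simp [γ, hθ]
  have hFγ : F ∘ γ =ᶠ[𝓝 0] fun t => F θ + (-(2 / π) * ∑ j, σ j * b j) * (t - 0) := by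
    filter_upwards [eventually_all.2 hσγ] with t ht
    simp only [Function.comp_apply, F, γ, ht, sub_zero]
    rw [Finset.mul_sum, Finset.sum_mul, ← Finset.sum_add_distrib]
    exact Finset.sum_congr rfl fun j _ => by ring
  have hγ0 : γ 0 = θ := by simp [γ]
  have hslope := IsLocalExtr.eq_zero_of_eventuallyEq_affine hFγ
    (IsExtrFilter.comp_tendsto (by rw [hγ0]; exact hextr) hγ)
  exact hb σ hσ (by simpa [pi_ne_zero] using hslope)

theorem stmt17 {k : ℕ} (w : Fin k → EuclideanSpace ℝ (Fin 2))
    (hw : ∀ j, ‖w j‖ = 1) (b : Fin k → ℝ)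
    (hb : ∀ ε : Fin k → ℝ, (∀ j, ε j = 1 ∨ ε j = -1) → ∑ j, ε j * b j ≠ 0)
    (F : EuclideanSpace ℝ (Fin 2) → ℝ)
    (hF : F = fun θ => ∑ j, b j * (1 - (2 / Real.pi) * Real.arccos ⟪θ, w j⟫)) :
    ∀ θ : EuclideanSpace ℝ (Fin 2), ‖θ‖ = 1 →
      IsLocalExtrOn F (Metric.sphere (0 : EuclideanSpace ℝ (Fin 2)) 1) θ →
      ∃ j, θ = w j ∨ θ = -w j := by
  subst hF
  have : Fact (finrank ℝ (EuclideanSpace ℝ (Fin 2)) = 2) := ⟨finrank_euclideanSpace_fin⟩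
  exact fun θ hθ hextr => exists_eq_or_eq_neg_of_isLocalExtrOn_sphere hw hb hθ hextr
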